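/- arXiv:2001.06699 — 10 statements merged into one kernel-verified Lean document; each statement's English description precedes it below -/
import Mathlib

section
/- Let (Ω, ℱ, P) be a probability space with a filtration (ℱ_k)_{k∈ℕ}, let (Φ_k) be an adapted process with Φ_k ≥ 0 almost surely and E[Φ_0] < ∞, let T be a stopping time with respect to (ℱ_k), and let c > 0. If for every k ∈ ℕ one has 𝟙_{{k < T}}·E[Φ_{k+1} | ℱ_k] ≤ 𝟙_{{k < T}}·(Φ_k − c) almost surely, then T < ∞ almost surely and E[T] ≤ E[Φ_0]/c. -/
open MeasureTheory
open scoped ENNReal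

/-! Integrating the drift inequality over the `ℱ k`-measurable event `{k < T}` gives
`b (k+1) + c P(k < T) ≤ b k` for `b k = E[Φ k; k < T] ≥ 0`, hence `c ∑ₖ P(k < T) ≤ E[Φ 0]`.
By the tail-sum formula the left side is `c E[T]`, and by Borel–Cantelli a finite
`∑ₖ P(k < T)` forces `T < ∞` almost surely. -/

lemma ENat.toENNReal_eq_tsum_indicator_lt (n : ℕ∞) :
    (n : ℝ≥0∞) = ∑' k : ℕ, {k : ℕ | (k : ℕ∞) < n}.indicator 1 k := by
  rw [← tsum_subtype, Pi.one_def, ENNReal.tsum_set_one]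
  cases n with
  | top => simp [Set.encard_univ]
  | coe m => simp [Set.Nat.encard_range]

namespace MeasureTheory

variable {Ω : Type*} {m0 : MeasurableSpace Ω} {μ : Measure Ω}

lemma lintegral_enat_eq_tsum_measure_lt (T : Ω → ℕ∞)
    (hT : ∀ k : ℕ, MeasurableSet {ω | (k : ℕ∞) < T ω}) :
    ∫⁻ ω, (T ω : ℝ≥0∞) ∂μ = ∑' k : ℕ, μ {ω | (k : ℕ∞) < T ω} := by
  calc ∫⁻ ω, (T ω : ℝ≥0∞) ∂μ
      = ∫⁻ ω, ∑' k : ℕ, {ω | (k : ℕ∞) < T ω}.indicator 1 ω ∂μ := by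
        congr 1 with ω
        rw [ENat.toENNReal_eq_tsum_indicator_lt]
        rfl
    _ = ∑' k : ℕ, μ {ω | (k : ℕ∞) < T ω} := by
        rw [lintegral_tsum fun k ↦ (measurable_one.indicator (hT k)).aemeasurable]
        exact tsum_congr fun k ↦ lintegral_indicator_one (hT k)

lemma ae_lt_top_of_tsum_measure_lt_ne_top {T : Ω → ℕ∞}
    (h : ∑' k : ℕ, μ {ω | (k : ℕ∞) < T ω} ≠ ∞) : ∀ᵐ ω ∂μ, T ω < ⊤ := by
  filter_upwards [ae_eventually_notMem h] with ω hω
  obtain ⟨k, hk⟩ := hω.exists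
  exact (not_lt.mp hk).trans_lt (ENat.natCast_lt_top k)

lemma setIntegral_add_mul_le_of_condExp_le [IsFiniteMeasure μ] {m : MeasurableSpace Ω}
    (hm : m ≤ m0) {f g : Ω → ℝ} {c : ℝ} {s t : Set Ω} (hs : MeasurableSet[m] s) (hts : t ⊆ s)
    (hf : Integrable f μ) (hg : Integrable g μ) (hg_nonneg : 0 ≤ᵐ[μ] g)
    (hdrift : ∀ᵐ ω ∂μ, ω ∈ s → μ[g|m] ω ≤ f ω - c) :
    ∫ ω in t, g ω ∂μ + c * μ.real s ≤ ∫ ω in s, f ω ∂μ := by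
  have h_mono : ∫ ω in t, g ω ∂μ ≤ ∫ ω in s, g ω ∂μ :=
    setIntegral_mono_set hg.integrableOn (ae_restrict_of_ae hg_nonneg) (.of_forall hts)
  have h_drift : ∫ ω in s, μ[g|m] ω ∂μ ≤ ∫ ω in s, (f ω - c) ∂μ :=
    setIntegral_mono_ae_restrict integrable_condExp.integrableOn
      (hf.sub (integrable_const c)).integrableOn ((ae_restrict_iff' (hm s hs)).2 hdrift)
  rw [setIntegral_condExp hm hg hs, integral_sub hf.integrableOn (integrable_const c),
    setIntegral_const, smul_eq_mul] at h_drift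
  linarith

lemma mul_sum_range_le_of_add_mul_le {a b : ℕ → ℝ} {c : ℝ} (hb : ∀ k, 0 ≤ b k)
    (h : ∀ k, b (k + 1) + c * a k ≤ b k) (n : ℕ) : c * ∑ k ∈ Finset.range n, a k ≤ b 0 := by
  suffices ∀ n, c * ∑ k ∈ Finset.range n, a k + b n ≤ b 0 by linarith [this n, hb n]
  intro n
  induction n with
  | zero => simp
  | succ n ih => rw [Finset.sum_range_succ]; linarith [h n]

lemma tsum_measure_le_of_condExp_drift [IsFiniteMeasure μ] {ℱ : Filtration ℕ m0}
    {Φ : ℕ → Ω → ℝ} {c : ℝ} (hc : 0 < c) (hΦint : ∀ k, Integrable (Φ k) μ)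
    (hΦnonneg : ∀ k, ∀ᵐ ω ∂μ, 0 ≤ Φ k ω) {A : ℕ → Set Ω} (hA : ∀ k, MeasurableSet[ℱ k] (A k))
    (hA_anti : Antitone A) (hdrift : ∀ k, ∀ᵐ ω ∂μ, ω ∈ A k → μ[Φ (k + 1)|ℱ k] ω ≤ Φ k ω - c) :
    ∑' k, μ (A k) ≤ ENNReal.ofReal ((∫ ω, Φ 0 ω ∂μ) / c) := by
  refine ENNReal.summable.tsum_le_of_sum_range_le fun n ↦ ?_
  have h_sum : c * ∑ k ∈ Finset.range n, μ.real (A k) ≤ ∫ ω in A 0, Φ 0 ω ∂μ :=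
    mul_sum_range_le_of_add_mul_le
      (fun k ↦ setIntegral_nonneg_ae (ℱ.le k _ (hA k)) ((hΦnonneg k).mono fun _ h _ ↦ h))
      (fun k ↦ setIntegral_add_mul_le_of_condExp_le (ℱ.le k) (hA k) (hA_anti k.le_succ)
        (hΦint k) (hΦint (k + 1)) (hΦnonneg (k + 1)) (hdrift k)) n
  have h_total : ∫ ω in A 0, Φ 0 ω ∂μ ≤ ∫ ω, Φ 0 ω ∂μ :=
    setIntegral_le_integral (hΦint 0) (hΦnonneg 0)
  calc ∑ k ∈ Finset.range n, μ (A k)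
      = ENNReal.ofReal (∑ k ∈ Finset.range n, μ.real (A k)) := by
        simp [ENNReal.ofReal_sum_of_nonneg, ofReal_measureReal]
    _ ≤ ENNReal.ofReal ((∫ ω, Φ 0 ω ∂μ) / c) :=
        ENNReal.ofReal_le_ofReal ((le_div_iff₀' hc).2 (h_sum.trans h_total))

end MeasureTheory

theorem stmt_2_general {Ω : Type*} {m : MeasurableSpace Ω} (P : Measure Ω) [IsProbabilityMeasure P]
    (ℱ : Filtration ℕ m) (Φ : ℕ → Ω → ℝ) (c : ℝ) (hc : 0 < c)
    (hΦint : ∀ k, Integrable (Φ k) P)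
    (hΦnonneg : ∀ k, ∀ᵐ ω ∂P, 0 ≤ Φ k ω)
    (T : Ω → ℕ∞)
    (hT : ∀ k : ℕ, MeasurableSet[ℱ k] {ω | T ω ≤ (k : ℕ∞)})
    (hdrift : ∀ k : ℕ, ∀ᵐ ω ∂P,
      (k : ℕ∞) < T ω → (P[Φ (k + 1)|ℱ k]) ω ≤ Φ k ω - c) :
    (∀ᵐ ω ∂P, T ω < ⊤) ∧
      ∫⁻ ω, (T ω : ℝ≥0∞) ∂P ≤ ENNReal.ofReal ((∫ ω, Φ 0 ω ∂P) / c) := by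
  have h_running : ∀ k : ℕ, MeasurableSet[ℱ k] {ω | (k : ℕ∞) < T ω} := fun k ↦ by
    simpa only [Set.compl_ofPred, not_le] using (hT k).compl
  have h_anti : Antitone fun k : ℕ ↦ {ω | (k : ℕ∞) < T ω} := fun _ _ hij _ hω ↦
    (Nat.cast_le.2 hij).trans_lt (α := ℕ∞) hω
  have h_bound := tsum_measure_le_of_condExp_drift hc hΦint hΦnonneg h_running h_anti hdrift
  exact ⟨ae_lt_top_of_tsum_measure_lt_ne_top (ne_top_of_le_ne_top ENNReal.ofReal_ne_top h_bound),
    (lintegral_enat_eq_tsum_measure_lt T fun k ↦ ℱ.le k _ (h_running k)).trans_le h_bound⟩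

/-- Expected-drift stopping-time bound: a nonnegative adapted process that decreases in
conditional expectation by a fixed amount `c > 0` before the stopping time `T` forces
`T < ∞` almost surely and `E[T] ≤ E[Φ 0] / c`. -/
theorem stmt_2 {Ω : Type*} {m : MeasurableSpace Ω} (P : Measure Ω) [IsProbabilityMeasure P]
    (ℱ : Filtration ℕ m) (Φ : ℕ → Ω → ℝ) (c : ℝ) (hc : 0 < c)
    (hadapted : Adapted ℱ Φ)
    (hΦint : ∀ k, Integrable (Φ k) P)
    (hΦnonneg : ∀ k, ∀ᵐ ω ∂P, 0 ≤ Φ k ω)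
    (T : Ω → ℕ∞)
    (hT : ∀ k : ℕ, MeasurableSet[ℱ k] {ω | T ω ≤ (k : ℕ∞)})
    (hdrift : ∀ k : ℕ, ∀ᵐ ω ∂P,
      (k : ℕ∞) < T ω → (P[Φ (k + 1)|ℱ k]) ω ≤ Φ k ω - c) :
    (∀ᵐ ω ∂P, T ω < ⊤) ∧
      ∫⁻ ω, (T ω : ℝ≥0∞) ∂P ≤ ENNReal.ofReal ((∫ ω, Φ 0 ω ∂P) / c) :=
  stmt_2_general P ℱ Φ c hc hΦint hΦnonneg T hT hdrift
end

section
/- Let E be a real inner product space, let g ∈ E with g ≠ 0, let H : E → E be a continuous linear self-adjoint operator with operator norm at most β for some β > 0, and let Δ > 0. Then there exists s ∈ E with ‖s‖ ≤ Δ, s a nonnegative multiple of −g, such that ⟨g, s⟩ + (1/2)⟨s, H s⟩ ≤ −(1/2)·‖g‖·min{Δ, ‖g‖/β}. -/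
/-! Take the step `t = min (Δ / ‖g‖) β⁻¹` along `-g`. Since `⟪g, H g⟫ ≤ β ‖g‖²` and `t β ≤ 1`,
the curvature term is at most half of the linear decrease `t ‖g‖²`, and `t ‖g‖ = min Δ (‖g‖ / β)`.
When `g = 0` or `β = 0`, the convention `x / 0 = 0` makes `t = 0`. -/

open scoped RealInnerProductSpace

lemma min_div_inv_mul_eq_min {a β Δ : ℝ} (ha : 0 ≤ a) (hΔ : 0 ≤ Δ) :
    min (Δ / a) β⁻¹ * a = min Δ (a / β) := by
  rcases ha.eq_or_lt with rfl | ha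
  · simp [hΔ]
  · rw [min_mul_of_nonneg _ _ ha.le, div_mul_cancel₀ _ ha.ne', inv_mul_eq_div]

lemma neg_mul_sq_add_sq_mul_le {a β t : ℝ} (ht : 0 ≤ t) (htβ : t * β ≤ 1) :
    -t * a ^ 2 + t ^ 2 / 2 * (β * a ^ 2) ≤ -(1 / 2) * a * (t * a) := by
  nlinarith [mul_le_mul_of_nonneg_right htβ (by positivity : 0 ≤ t * a ^ 2)]

section
variable {E : Type*} [NormedAddCommGroup E] [InnerProductSpace ℝ E]

lemma real_inner_map_self_le_of_opNorm_le (H : E →L[ℝ] E) {β : ℝ} (hH : ‖H‖ ≤ β) (x : E) :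
    ⟪x, H x⟫ ≤ β * ‖x‖ ^ 2 :=
  calc ⟪x, H x⟫ ≤ ‖x‖ * ‖H x‖ := real_inner_le_norm _ _
    _ ≤ ‖x‖ * (β * ‖x‖) := by gcongr; exact H.le_of_opNorm_le hH x
    _ = β * ‖x‖ ^ 2 := by ring

lemma quadratic_model_smul_neg (g : E) (H : E →L[ℝ] E) (t : ℝ) :
    ⟪g, t • -g⟫ + (1 / 2) * ⟪t • -g, H (t • -g)⟫ = -t * ‖g‖ ^ 2 + t ^ 2 / 2 * ⟪g, H g⟫ := by
  simp only [map_smul, map_neg, real_inner_smul_left, real_inner_smul_right, inner_neg_right,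
    inner_neg_left, real_inner_self_eq_norm_sq]
  ring

end

theorem stmt_3_general {E : Type*} [NormedAddCommGroup E] [InnerProductSpace ℝ E]
    (g : E) (H : E →L[ℝ] E)
    (β : ℝ) (hHnorm : ‖H‖ ≤ β) (Δ : ℝ) (hΔ : 0 < Δ) :
    ∃ s : E, ‖s‖ ≤ Δ ∧ (∃ t : ℝ, 0 ≤ t ∧ s = t • (-g)) ∧
      ⟪g, s⟫ + (1 / 2) * ⟪s, H s⟫ ≤ -(1 / 2) * ‖g‖ * min Δ (‖g‖ / β) := by
  have hβ : 0 ≤ β := (norm_nonneg H).trans hHnorm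
  set t := min (Δ / ‖g‖) β⁻¹
  have ht : 0 ≤ t := le_min (by positivity) (by positivity)
  have htβ : t * β ≤ 1 :=
    (mul_le_mul_of_nonneg_right (min_le_right _ _) hβ).trans (inv_mul_le_one_of_le₀ le_rfl hβ)
  have hstep : t * ‖g‖ = min Δ (‖g‖ / β) := min_div_inv_mul_eq_min (norm_nonneg g) hΔ.le
  refine ⟨t • -g, ?_, ⟨t, ht, rfl⟩, ?_⟩
  · rw [norm_smul, norm_neg, Real.norm_of_nonneg ht, hstep]
    exact min_le_left _ _
  · calc _ = -t * ‖g‖ ^ 2 + t ^ 2 / 2 * ⟪g, H g⟫ := quadratic_model_smul_neg g H t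
      _ ≤ -t * ‖g‖ ^ 2 + t ^ 2 / 2 * (β * ‖g‖ ^ 2) := by
        gcongr; exact real_inner_map_self_le_of_opNorm_le H hHnorm g
      _ ≤ -(1 / 2) * ‖g‖ * (t * ‖g‖) := neg_mul_sq_add_sq_mul_le ht htβ
      _ = _ := by rw [hstep]

/-- Cauchy decrease lemma for trust region methods: minimizing the quadratic model
along the steepest descent direction within a ball of radius `Δ` achieves model
reduction at least `(1/2) ‖g‖ min {Δ, ‖g‖/β}`. -/
theorem stmt_3 {E : Type*} [NormedAddCommGroup E] [InnerProductSpace ℝ E]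
    (g : E) (hg : g ≠ 0) (H : E →L[ℝ] E)
    (hsym : ∀ u v : E, ⟪H u, v⟫ = ⟪u, H v⟫)
    (β : ℝ) (hβ : 0 < β) (hHnorm : ‖H‖ ≤ β) (Δ : ℝ) (hΔ : 0 < Δ) :
    ∃ s : E, ‖s‖ ≤ Δ ∧ (∃ t : ℝ, 0 ≤ t ∧ s = t • (-g)) ∧
      ⟪g, s⟫ + (1 / 2) * ⟪s, H s⟫ ≤ -(1 / 2) * ‖g‖ * min Δ (‖g‖ / β) :=
  stmt_3_general g H β hHnorm Δ hΔ
end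

section
/- Let γ > 1, η ∈ (0,1), c₂ > 0, f* ∈ ℝ, and ν ∈ (0,1) satisfy ν·η·c₂ ≥ (1 − ν)·(γ² − γ⁻²). Let E be a real inner product space, f : E → ℝ with f(y) ≥ f* for all y, and let x_k, x_{k+1} ∈ E and α_k, α_{k+1} > 0 be such that EITHER (successful case) f(x_k) − f(x_{k+1}) ≥ η·c₂·α_k² and α_{k+1} ≤ γ·α_k, OR (unsuccessful case) x_{k+1} = x_k and α_{k+1} = γ⁻¹·α_k. Define Φ_j = ν·(f(x_j) − f*) + (1 − ν)·α_j² for j ∈ {k, k+1}. Then Φ_k − Φ_{k+1} ≥ (1 − ν)·(1 − γ⁻²)·α_k². -/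
/-! In a successful step the function decrease `ν η c₂ α_k²` pays for a radius growth of up to
`γ²`, which is what the condition on `ν` encodes; in an unsuccessful step `f` is unchanged and the
`α²` term drops by exactly the factor `γ⁻²`. -/

lemma progress_of_successful_step {ν c γ α α' Δf : ℝ} (hν : 0 ≤ ν) (hν1 : ν ≤ 1)
    (hνcond : ν * c ≥ (1 - ν) * (γ ^ 2 - γ⁻¹ ^ 2)) (hdec : Δf ≥ c * α ^ 2)
    (hα' : 0 ≤ α') (hgrow : α' ≤ γ * α) :
    ν * Δf + (1 - ν) * (α ^ 2 - α' ^ 2) ≥ (1 - ν) * (1 - γ⁻¹ ^ 2) * α ^ 2 := by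
  have h1ν : 0 ≤ 1 - ν := sub_nonneg.2 hν1
  calc ν * Δf + (1 - ν) * (α ^ 2 - α' ^ 2)
      ≥ ν * (c * α ^ 2) + (1 - ν) * (α ^ 2 - (γ * α) ^ 2) := by gcongr
    _ = (ν * c - (1 - ν) * (γ ^ 2 - γ⁻¹ ^ 2)) * α ^ 2 + (1 - ν) * (1 - γ⁻¹ ^ 2) * α ^ 2 := by
        ring
    _ ≥ (1 - ν) * (1 - γ⁻¹ ^ 2) * α ^ 2 :=
        le_add_of_nonneg_left (mul_nonneg (sub_nonneg.2 hνcond) (sq_nonneg α))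

theorem stmt_5_general {E : Type*}
    (γ η c₂ fstar ν : ℝ)
    (hν : 0 < ν) (hν1 : ν < 1)
    (hνcond : ν * η * c₂ ≥ (1 - ν) * (γ ^ 2 - γ⁻¹ ^ 2))
    (f : E → ℝ)
    (xk xk1 : E) (αk αk1 : ℝ) (hαk1 : 0 < αk1)
    (hcase : (f xk - f xk1 ≥ η * c₂ * αk ^ 2 ∧ αk1 ≤ γ * αk) ∨
      (xk1 = xk ∧ αk1 = γ⁻¹ * αk)) :
    (ν * (f xk - fstar) + (1 - ν) * αk ^ 2) -
      (ν * (f xk1 - fstar) + (1 - ν) * αk1 ^ 2) ≥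
      (1 - ν) * (1 - γ⁻¹ ^ 2) * αk ^ 2 := by
  rw [show (ν * (f xk - fstar) + (1 - ν) * αk ^ 2) - (ν * (f xk1 - fstar) + (1 - ν) * αk1 ^ 2)
      = ν * (f xk - f xk1) + (1 - ν) * (αk ^ 2 - αk1 ^ 2) by ring]
  rcases hcase with ⟨hdec, hgrow⟩ | ⟨rfl, rfl⟩
  · exact progress_of_successful_step hν.le hν1.le (by rwa [← mul_assoc]) hdec hαk1.le hgrow
  · exact le_of_eq (by ring)

/-- Per-iteration progress bound for the classical trust region instance of the adaptive
deterministic framework, with progress measure `Φ_j = ν (f x_j - f*) + (1-ν) α_j²`. -/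
theorem stmt_5 {E : Type*} [NormedAddCommGroup E] [InnerProductSpace ℝ E]
    (γ η c₂ fstar ν : ℝ) (hγ : 1 < γ) (hη : 0 < η) (hη1 : η < 1) (hc₂ : 0 < c₂)
    (hν : 0 < ν) (hν1 : ν < 1)
    (hνcond : ν * η * c₂ ≥ (1 - ν) * (γ ^ 2 - γ⁻¹ ^ 2))
    (f : E → ℝ) (hfstar : ∀ y, fstar ≤ f y)
    (xk xk1 : E) (αk αk1 : ℝ) (hαk : 0 < αk) (hαk1 : 0 < αk1)
    (hcase : (f xk - f xk1 ≥ η * c₂ * αk ^ 2 ∧ αk1 ≤ γ * αk) ∨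
      (xk1 = xk ∧ αk1 = γ⁻¹ * αk)) :
    (ν * (f xk - fstar) + (1 - ν) * αk ^ 2) -
      (ν * (f xk1 - fstar) + (1 - ν) * αk1 ^ 2) ≥
      (1 - ν) * (1 - γ⁻¹ ^ 2) * αk ^ 2 :=
  stmt_5_general γ η c₂ fstar ν hν hν1 hνcond f xk xk1 αk αk1 hαk1 hcase
end

section
/- Let E be a real inner product space, f : E → ℝ differentiable with f(y) ≥ f* for all y and some f* ∈ ℝ. Let γ > 1, η ∈ (0,1), c₂ > 0, c₁ > 0, ε > 0, and ν ∈ (0,1) with ν·η·c₂ ≥ (1 − ν)·(γ² − γ⁻²). Let (x_k)_{k∈ℕ} in E and (α_k)_{k∈ℕ} positive reals be sequences such that for every k either (successful) f(x_k) − f(x_{k+1}) ≥ η·c₂·α_k² and α_{k+1} ≤ γ·α_k, or (unsuccessful) x_{k+1} = x_k and α_{k+1} = γ⁻¹·α_k. Define T_ε := min{k ∈ ℕ : ‖∇f(x_k)‖ ≤ ε} and suppose α_k ≥ c₁·ε for all k < T_ε. Then T_ε ≤ (ν·(f(x_0) − f*) + (1 − ν)·α_0²) / ((1 − ν)·(1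 − γ⁻²)·c₁²·ε²). -/
/-!
Along the iterates the merit `Φ k = ν (f(x_k) - f*) + (1 - ν) α_k²` is nonnegative and drops by
at least `(1 - ν)(1 - γ⁻²) α_k²` per iteration: on an unsuccessful step the radius shrinks by
`γ⁻¹`, and on a successful one the decrease `ν η c₂ α_k²` of the function part pays for the
growth `(1 - ν)(γ² - 1) α_k²` of the radius part by the condition on `ν`. Before `T_ε` the radius
is at least `c₁ ε`, so each of the first `T_ε` steps lowers `Φ` by a fixed amount and
`T_ε ≤ Φ 0 / ((1 - ν)(1 - γ⁻²) c₁² ε²)`.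
-/

open Finset

theorem natCast_le_div_of_forall_add_le {Φ : ℕ → ℝ} {C : ℝ} {T : ℕ} (hC : 0 < C)
    (hΦT : 0 ≤ Φ T) (hstep : ∀ k < T, Φ (k + 1) + C ≤ Φ k) : (T : ℝ) ≤ Φ 0 / C := by
  rw [le_div_iff₀ hC]
  calc (T : ℝ) * C = ∑ _k ∈ range T, C := by simp
    _ ≤ ∑ k ∈ range T, (Φ k - Φ (k + 1)) :=
        sum_le_sum fun k hk => by linarith [hstep k (mem_range.1 hk)]
    _ = Φ 0 - Φ T := sum_range_sub' Φ T
    _ ≤ Φ 0 := by linarith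

namespace TrustRegion

variable {E : Type*} (f : E → ℝ) (fstar ν : ℝ) (x : ℕ → E) (α : ℕ → ℝ)

def merit (k : ℕ) : ℝ := ν * (f (x k) - fstar) + (1 - ν) * α k ^ 2

variable {f fstar ν x α}

theorem merit_nonneg (hfstar : ∀ y, fstar ≤ f y) (hν : 0 ≤ ν) (hν1 : ν ≤ 1) (k : ℕ) :
    0 ≤ merit f fstar ν x α k :=
  add_nonneg (mul_nonneg hν (sub_nonneg.2 (hfstar _))) (mul_nonneg (sub_nonneg.2 hν1) (sq_nonneg _))

theorem merit_succ_of_unsuccessful {γ : ℝ} {k : ℕ} (hx : x (k + 1) = x k)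
    (hα : α (k + 1) = γ⁻¹ * α k) :
    merit f fstar ν x α (k + 1) = merit f fstar ν x α k - (1 - ν) * (1 - γ⁻¹ ^ 2) * α k ^ 2 := by
  simp only [merit, hx, hα]
  ring

theorem merit_succ_le_of_successful {γ η c₂ : ℝ} (hν : 0 ≤ ν) (hν1 : ν ≤ 1)
    (hνcond : ν * η * c₂ ≥ (1 - ν) * (γ ^ 2 - γ⁻¹ ^ 2)) {k : ℕ}
    (hdec : f (x k) - f (x (k + 1)) ≥ η * c₂ * α k ^ 2) (hα : 0 ≤ α (k + 1))
    (hgrow : α (k + 1) ≤ γ * α k) :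
    merit f fstar ν x α (k + 1) ≤ merit f fstar ν x α k - (1 - ν) * (1 - γ⁻¹ ^ 2) * α k ^ 2 := by
  have hf : ν * η * c₂ * α k ^ 2 ≤ ν * (f (x k) - f (x (k + 1))) := by
    rw [mul_assoc ν, mul_assoc ν]
    exact mul_le_mul_of_nonneg_left (by linarith) hν
  have hsq : α (k + 1) ^ 2 ≤ γ ^ 2 * α k ^ 2 := by
    rw [← mul_pow]
    exact pow_le_pow_left₀ hα hgrow 2
  have hcond := mul_le_mul_of_nonneg_right hνcond (sq_nonneg (α k))
  have hrad := mul_le_mul_of_nonneg_left hsq (sub_nonneg.2 hν1)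
  simp only [merit]
  linarith

end TrustRegion

open TrustRegion in
theorem stmt_6_general {E : Type*} [NormedAddCommGroup E] [InnerProductSpace ℝ E] [CompleteSpace E]
    (f : E → ℝ) (fstar : ℝ) (hfstar : ∀ y, fstar ≤ f y)
    (γ η c₂ c₁ ε ν : ℝ) (hγ : 1 < γ)
    (hc₁ : 0 < c₁) (hε : 0 < ε) (hν : 0 < ν) (hν1 : ν < 1)
    (hνcond : ν * η * c₂ ≥ (1 - ν) * (γ ^ 2 - γ⁻¹ ^ 2))
    (x : ℕ → E) (α : ℕ → ℝ) (hαpos : ∀ k, 0 < α k)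
    (hcase : ∀ k : ℕ,
      (f (x k) - f (x (k + 1)) ≥ η * c₂ * (α k) ^ 2 ∧ α (k + 1) ≤ γ * α k) ∨
      (x (k + 1) = x k ∧ α (k + 1) = γ⁻¹ * α k))
    (hαlow : ∀ k : ℕ, (∀ j ≤ k, ε < ‖gradient f (x j)‖) → c₁ * ε ≤ α k) :
    ∀ T : ℕ, (∀ k < T, ε < ‖gradient f (x k)‖) →
      (T : ℝ) ≤ (ν * (f (x 0) - fstar) + (1 - ν) * (α 0) ^ 2) /
        ((1 - ν) * (1 - γ⁻¹ ^ 2) * c₁ ^ 2 * ε ^ 2) := by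
  intro T hT
  have hshrink : 0 < 1 - γ⁻¹ ^ 2 := by
    have : γ⁻¹ < 1 := inv_lt_one_of_one_lt₀ hγ
    nlinarith [inv_pos.2 (zero_lt_one.trans hγ)]
  have hν_compl : 0 < 1 - ν := sub_pos.2 hν1
  refine natCast_le_div_of_forall_add_le (Φ := merit f fstar ν x α) (by positivity)
    (merit_nonneg hfstar hν.le hν1.le T) fun k hk => ?_
  have hαk : c₁ * ε ≤ α k := hαlow k fun j hj => hT j (hj.trans_lt hk)
  have hgain : (1 - ν) * (1 - γ⁻¹ ^ 2) * c₁ ^ 2 * ε ^ 2 ≤ (1 - ν) * (1 - γ⁻¹ ^ 2) * α k ^ 2 := by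
    rw [mul_assoc _ (c₁ ^ 2), ← mul_pow]
    gcongr
  rcases hcase k with ⟨hdec, hgrow⟩ | ⟨hx, hα⟩
  · linarith [merit_succ_le_of_successful (fstar := fstar) hν.le hν1.le hνcond hdec (hαpos (k + 1)).le hgrow]
  · linarith [merit_succ_of_unsuccessful (f := f) (fstar := fstar) (ν := ν) hx hα]

/-- `O(ε⁻²)` iteration complexity for the classical trust region instance of the adaptive
deterministic framework.  The stopping time `T_ε = min {k : ‖∇f(x_k)‖ ≤ ε}` is captured by
quantifying over all `T` such that `ε < ‖∇f(x_k)‖` for every `k < T`; the hypothesis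
`α_k ≥ c₁ ε` for all `k < T_ε` is expressed via the equivalence
`k < T_ε ↔ ∀ j ≤ k, ε < ‖∇f(x_j)‖`. -/
theorem stmt_6 {E : Type*} [NormedAddCommGroup E] [InnerProductSpace ℝ E] [CompleteSpace E]
    (f : E → ℝ) (hf : Differentiable ℝ f) (fstar : ℝ) (hfstar : ∀ y, fstar ≤ f y)
    (γ η c₂ c₁ ε ν : ℝ) (hγ : 1 < γ) (hη : 0 < η) (hη1 : η < 1)
    (hc₂ : 0 < c₂) (hc₁ : 0 < c₁) (hε : 0 < ε) (hν : 0 < ν) (hν1 : ν < 1)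
    (hνcond : ν * η * c₂ ≥ (1 - ν) * (γ ^ 2 - γ⁻¹ ^ 2))
    (x : ℕ → E) (α : ℕ → ℝ) (hαpos : ∀ k, 0 < α k)
    (hcase : ∀ k : ℕ,
      (f (x k) - f (x (k + 1)) ≥ η * c₂ * (α k) ^ 2 ∧ α (k + 1) ≤ γ * α k) ∨
      (x (k + 1) = x k ∧ α (k + 1) = γ⁻¹ * α k))
    (hαlow : ∀ k : ℕ, (∀ j ≤ k, ε < ‖gradient f (x j)‖) → c₁ * ε ≤ α k) :
    ∀ T : ℕ, (∀ k < T, ε < ‖gradient f (x k)‖) →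
      (T : ℝ) ≤ (ν * (f (x 0) - fstar) + (1 - ν) * (α 0) ^ 2) /
        ((1 - ν) * (1 - γ⁻¹ ^ 2) * c₁ ^ 2 * ε ^ 2) :=
  stmt_6_general f fstar hfstar γ η c₂ c₁ ε ν hγ hc₁ hε hν hν1 hνcond x α hαpos hcase hαlow
end

section
/- Let E be a real inner product space, f : E → ℝ differentiable with ∇f Lipschitz continuous with constant L > 0. Let M : E → E be a continuous linear self-adjoint operator with κ₁·‖v‖² ≤ ⟨v, M v⟩ and ‖M v‖ ≤ κ₂·‖v‖ for all v ∈ E, where 0 < κ₁ ≤ κ₂. Let x ∈ E with ∇f(x) ≠ 0, let η ∈ (0,1), α > 0, and set d = −M ∇f(x). If the Armijo condition fails at stepsize α, i.e., f(x + α·d) − f(x) > η·α·⟨∇f(x), d⟩, then α > 2·(1 − η)·κ₁/(L·κ₂²). -/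
/-!
By the descent lemma, an `L`-Lipschitz gradient gives
`f (x + α d) - f x ≤ α ⟪∇f x, d⟫ + L α² ‖d‖² / 2`, so Armijo failure forces
`(1 - η) (-⟪∇f x, d⟫) < L α ‖d‖² / 2`. For `d = -M ∇f x` the left side is at least
`(1 - η) κ₁ ‖∇f x‖²` and `‖d‖² ≤ κ₂² ‖∇f x‖²`; dividing by `‖∇f x‖² > 0` gives the bound on `α`.
-/

open scoped RealInnerProductSpace

section LipschitzGradient

variable {E : Type*} [NormedAddCommGroup E] [InnerProductSpace ℝ E] [CompleteSpace E]
  {f : E → ℝ} {L : ℝ}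

theorem hasDerivAt_comp_add_smul (hf : Differentiable ℝ f) (x y : E) (t : ℝ) :
    HasDerivAt (fun s : ℝ => f (x + s • y)) ⟪gradient f (x + t • y), y⟫ t := by
  have hline : HasDerivAt (fun s : ℝ => x + s • y) y t := by
    simpa using ((hasDerivAt_id t).smul_const y).const_add x
  exact ((hf _).hasFDerivAt.comp_hasDerivAt t hline).congr_deriv inner_gradient_left.symm

theorem sub_le_inner_gradient_add_of_lipschitz (hf : Differentiable ℝ f)
    (hLip : ∀ u v : E, ‖gradient f u - gradient f v‖ ≤ L * ‖u - v‖) (x y : E) :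
    f (x + y) - f x ≤ ⟪gradient f x, y⟫ + L / 2 * ‖y‖ ^ 2 := by
  -- `ψ t` is the gap between `f` and its quadratic upper model along `t ↦ x + t • y`
  set ψ : ℝ → ℝ := fun t => f (x + t • y) - t * ⟪gradient f x, y⟫ - L / 2 * t ^ 2 * ‖y‖ ^ 2
  have hψ' : ∀ t, HasDerivAt ψ
      (⟪gradient f (x + t • y) - gradient f x, y⟫ - L * t * ‖y‖ ^ 2) t := by
    intro t
    refine (((hasDerivAt_comp_add_smul hf x y t).sub
      ((hasDerivAt_id' t).mul_const ⟪gradient f x, y⟫)).sub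
      (((hasDerivAt_pow 2 t).const_mul (L / 2)).mul_const (‖y‖ ^ 2))).congr_deriv ?_
    rw [inner_sub_left]
    push_cast
    ring
  have hψ'_nonpos : ∀ t ∈ interior (Set.Ici (0 : ℝ)),
      ⟪gradient f (x + t • y) - gradient f x, y⟫ - L * t * ‖y‖ ^ 2 ≤ 0 := by
    intro t ht
    rw [interior_Ici] at ht
    rw [sub_nonpos]
    calc ⟪gradient f (x + t • y) - gradient f x, y⟫
        ≤ ‖gradient f (x + t • y) - gradient f x‖ * ‖y‖ := real_inner_le_norm _ _
      _ ≤ L * ‖x + t • y - x‖ * ‖y‖ := by gcongr; exact hLip _ _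
      _ = L * t * ‖y‖ ^ 2 := by
        rw [add_sub_cancel_left, norm_smul, Real.norm_of_nonneg (le_of_lt ht)]; ring
  have hψ_anti : AntitoneOn ψ (Set.Ici 0) :=
    antitoneOn_of_hasDerivWithinAt_nonpos (convex_Ici 0)
      (fun t _ => (hψ' t).continuousAt.continuousWithinAt)
      (fun t _ => (hψ' t).hasDerivWithinAt) hψ'_nonpos
  have hψ_one : ψ 1 ≤ ψ 0 := hψ_anti Set.self_mem_Ici (Set.mem_Ici.2 zero_le_one) zero_le_one
  simp only [ψ, one_smul, zero_smul, add_zero] at hψ_one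
  linarith

theorem one_sub_mul_neg_inner_lt_of_armijo_fails (hf : Differentiable ℝ f)
    (hLip : ∀ u v : E, ‖gradient f u - gradient f v‖ ≤ L * ‖u - v‖) {x d : E} {η α : ℝ}
    (hα : 0 < α) (hfail : f (x + α • d) - f x > η * α * ⟪gradient f x, d⟫) :
    (1 - η) * -⟪gradient f x, d⟫ < L * α * ‖d‖ ^ 2 / 2 := by
  have hdescent := sub_le_inner_gradient_add_of_lipschitz hf hLip x (α • d)
  rw [real_inner_smul_right, norm_smul, Real.norm_of_nonneg hα.le] at hdescent
  have : α * ((1 - η) * -⟪gradient f x, d⟫) < α * (L * α * ‖d‖ ^ 2 / 2) := by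
    linarith
  exact lt_of_mul_lt_mul_left this hα.le

end LipschitzGradient

theorem stmt_7_general {E : Type*} [NormedAddCommGroup E] [InnerProductSpace ℝ E] [CompleteSpace E]
    (f : E → ℝ) (hf : Differentiable ℝ f) (L : ℝ) (hL : 0 < L)
    (hLip : ∀ u v : E, ‖gradient f u - gradient f v‖ ≤ L * ‖u - v‖)
    (M : E →L[ℝ] E)
    (κ₁ κ₂ : ℝ) (hκ₁ : 0 < κ₁) (hκ₁₂ : κ₁ ≤ κ₂)
    (hlow : ∀ v : E, κ₁ * ‖v‖ ^ 2 ≤ ⟪v, M v⟫)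
    (hup : ∀ v : E, ‖M v‖ ≤ κ₂ * ‖v‖)
    (x : E) (hgx : gradient f x ≠ 0)
    (η α : ℝ) (hη1 : η < 1) (hα : 0 < α)
    (d : E) (hd : d = -(M (gradient f x)))
    (hfail : f (x + α • d) - f x > η * α * ⟪gradient f x, d⟫) :
    α > 2 * (1 - η) * κ₁ / (L * κ₂ ^ 2) := by
  set g := gradient f x
  have hdecrease : κ₁ * ‖g‖ ^ 2 ≤ -⟪g, d⟫ := by
    simpa [hd] using hlow g
  have hnorm_d : ‖d‖ ^ 2 ≤ κ₂ ^ 2 * ‖g‖ ^ 2 := by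
    rw [← mul_pow]
    exact pow_le_pow_left₀ (norm_nonneg d) (by simpa [hd] using hup g) 2
  have hstep := one_sub_mul_neg_inner_lt_of_armijo_fails hf hLip hα hfail
  have hg : 0 < ‖g‖ ^ 2 := by positivity
  have hκ₂ : 0 < κ₂ := hκ₁.trans_le hκ₁₂
  have hbound : (1 - η) * κ₁ * ‖g‖ ^ 2 < L * α * κ₂ ^ 2 / 2 * ‖g‖ ^ 2 := calc
    (1 - η) * κ₁ * ‖g‖ ^ 2 ≤ (1 - η) * -⟪g, d⟫ := by
      rw [mul_assoc]; exact mul_le_mul_of_nonneg_left hdecrease (by linarith)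
    _ < L * α * ‖d‖ ^ 2 / 2 := hstep
    _ ≤ L * α * (κ₂ ^ 2 * ‖g‖ ^ 2) / 2 := by gcongr
    _ = L * α * κ₂ ^ 2 / 2 * ‖g‖ ^ 2 := by ring
  rw [gt_iff_lt, div_lt_iff₀ (by positivity)]
  linarith [lt_of_mul_lt_mul_right hbound hg.le]

/-- Line search: failure of the Armijo condition at stepsize `α` along the direction
`d = -M ∇f(x)` (with `M` self-adjoint, `κ₁ ‖v‖² ≤ ⟪v, M v⟫`, `‖M v‖ ≤ κ₂ ‖v‖`) forces
`α > 2 (1-η) κ₁ / (L κ₂²)` when `∇f` is `L`-Lipschitz. -/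
theorem stmt_7 {E : Type*} [NormedAddCommGroup E] [InnerProductSpace ℝ E] [CompleteSpace E]
    (f : E → ℝ) (hf : Differentiable ℝ f) (L : ℝ) (hL : 0 < L)
    (hLip : ∀ u v : E, ‖gradient f u - gradient f v‖ ≤ L * ‖u - v‖)
    (M : E →L[ℝ] E) (hsym : ∀ u v : E, ⟪M u, v⟫ = ⟪u, M v⟫)
    (κ₁ κ₂ : ℝ) (hκ₁ : 0 < κ₁) (hκ₁₂ : κ₁ ≤ κ₂)
    (hlow : ∀ v : E, κ₁ * ‖v‖ ^ 2 ≤ ⟪v, M v⟫)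
    (hup : ∀ v : E, ‖M v‖ ≤ κ₂ * ‖v‖)
    (x : E) (hgx : gradient f x ≠ 0)
    (η α : ℝ) (hη : 0 < η) (hη1 : η < 1) (hα : 0 < α)
    (d : E) (hd : d = -(M (gradient f x)))
    (hfail : f (x + α • d) - f x > η * α * ⟪gradient f x, d⟫) :
    α > 2 * (1 - η) * κ₁ / (L * κ₂ ^ 2) :=
  stmt_7_general f hf L hL hLip M κ₁ κ₂ hκ₁ hκ₁₂ hlow hup x hgx η α hη1 hα d hd hfail
end

section
/- Let E be a real inner product space, f : E → ℝ differentiable with ∇f Lipschitz continuous with constant L > 0 and f(y) ≥ f* for all y and some f* ∈ ℝ. Let γ > 1, η ∈ (0,1), c₃ > 0, β > 0, ᾱ > 0, and ν ∈ (0,1) satisfy ν·η·c₃ ≥ (1 − ν)·((L·ᾱ·β + 1)²·γ − γ⁻¹). Let x_k, x_{k+1} ∈ E and α_k, α_{k+1} ∈ (0, ᾱ] be such that EITHER (successful case) x_{k+1} = x_k + α_k·d_k for some d_k ∈ E with ‖d_k‖ ≤ β·‖∇f(x_k)‖, f(x_k) − f(x_{k+1}) ≥ η·c₃·α_k·‖∇f(x_k)‖²,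 and α_{k+1} ≤ γ·α_k, OR (unsuccessful case) x_{k+1} = x_k and α_{k+1} = γ⁻¹·α_k. Define Φ_j = ν·(f(x_j) − f*) + (1 − ν)·α_j·‖∇f(x_j)‖² for j ∈ {k, k+1}. Then Φ_k − Φ_{k+1} ≥ (1 − ν)·(1 − γ⁻¹)·α_k·‖∇f(x_k)‖². -/
/-!
On an unsuccessful iteration nothing but the stepsize changes, and shrinking it by `γ⁻¹` removes
exactly the fraction `1 - γ⁻¹` of the gradient term. On a successful iteration the Lipschitz
gradient grows by at most the factor `L ᾱ β + 1` along the step, so the gradient term grows by at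
most `(L ᾱ β + 1)² γ`; the condition on `ν` makes the guaranteed decrease of `f` pay for this.
-/

lemma norm_apply_add_smul_le_of_lipschitz {E F : Type*} [SeminormedAddCommGroup E]
    [NormedSpace ℝ E] [SeminormedAddCommGroup F] {G : E → F} {L β a abar : ℝ}
    (hL : 0 ≤ L) (hLip : ∀ u v, ‖G u - G v‖ ≤ L * ‖u - v‖)
    (ha : 0 ≤ a) (habar : a ≤ abar) {x d : E} (hd : ‖d‖ ≤ β * ‖G x‖) :
    ‖G (x + a • d)‖ ≤ (L * abar * β + 1) * ‖G x‖ := by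
  have hstep : ‖G (x + a • d) - G x‖ ≤ L * abar * β * ‖G x‖ :=
    calc ‖G (x + a • d) - G x‖ ≤ L * ‖x + a • d - x‖ := hLip _ _
      _ = L * (a * ‖d‖) := by rw [add_sub_cancel_left, norm_smul, Real.norm_of_nonneg ha]
      _ ≤ L * (abar * (β * ‖G x‖)) := by gcongr; linarith
      _ = L * abar * β * ‖G x‖ := by ring
  linarith [norm_le_norm_sub_add (G (x + a • d)) (G x)]

lemma le_weighted_progress_of_decrease_of_growth {ν θ ρ c a b Δ : ℝ} (hν : 0 ≤ ν) (hν1 : ν ≤ 1) (ha : 0 ≤ a)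
    (hΔ : θ * a ≤ Δ) (hb : b ≤ ρ * a) (hcond : (1 - ν) * (ρ - c) ≤ ν * θ) :
    (1 - ν) * (1 - c) * a ≤ ν * Δ + (1 - ν) * (a - b) := by
  have hdecrease : (1 - ν) * (ρ - c) * a ≤ ν * Δ :=
    calc (1 - ν) * (ρ - c) * a ≤ ν * θ * a := by gcongr
      _ ≤ ν * Δ := by rw [mul_assoc]; gcongr
  have hgrowth : (1 - ν) * (a - ρ * a) ≤ (1 - ν) * (a - b) := by gcongr
  linarith

theorem stmt_9_general {E : Type*} [NormedAddCommGroup E] [InnerProductSpace ℝ E] [CompleteSpace E]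
    (f : E → ℝ) (L fstar : ℝ) (hL : 0 < L)
    (hLip : ∀ u v : E, ‖gradient f u - gradient f v‖ ≤ L * ‖u - v‖)
    (γ η c₃ β αbar ν : ℝ) (hγ : 1 < γ)
    (hν : 0 < ν) (hν1 : ν < 1)
    (hνcond : ν * η * c₃ ≥ (1 - ν) * ((L * αbar * β + 1) ^ 2 * γ - γ⁻¹))
    (xk xk1 : E) (αk αk1 : ℝ)
    (hαk : 0 < αk) (hαkbar : αk ≤ αbar)
    (hcase : (∃ d : E, xk1 = xk + αk • d ∧ ‖d‖ ≤ β * ‖gradient f xk‖ ∧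
        f xk - f xk1 ≥ η * c₃ * αk * ‖gradient f xk‖ ^ 2 ∧ αk1 ≤ γ * αk) ∨
      (xk1 = xk ∧ αk1 = γ⁻¹ * αk)) :
    (ν * (f xk - fstar) + (1 - ν) * αk * ‖gradient f xk‖ ^ 2) -
      (ν * (f xk1 - fstar) + (1 - ν) * αk1 * ‖gradient f xk1‖ ^ 2) ≥
      (1 - ν) * (1 - γ⁻¹) * αk * ‖gradient f xk‖ ^ 2 := by
  rcases hcase with ⟨d, rfl, hd, hdec, hαk1⟩ | ⟨rfl, rfl⟩
  · have hgrad := norm_apply_add_smul_le_of_lipschitz hL.le hLip hαk.le hαkbar hd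
    have hgrowth : αk1 * ‖gradient f (xk + αk • d)‖ ^ 2 ≤
        (L * αbar * β + 1) ^ 2 * γ * (αk * ‖gradient f xk‖ ^ 2) :=
      calc αk1 * ‖gradient f (xk + αk • d)‖ ^ 2
          ≤ (γ * αk) * ((L * αbar * β + 1) * ‖gradient f xk‖) ^ 2 := by gcongr
        _ = (L * αbar * β + 1) ^ 2 * γ * (αk * ‖gradient f xk‖ ^ 2) := by ring
    have := le_weighted_progress_of_decrease_of_growth (θ := η * c₃) (c := γ⁻¹) hν.le hν1.le (by positivity)
      (by simpa only [mul_assoc] using hdec) hgrowth (by linarith)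
    linarith
  · exact ge_of_eq (by ring)

/-- Per-iteration progress bound for the classical line search instance of the adaptive
deterministic framework, with progress measure
`Φ_j = ν (f x_j - f*) + (1-ν) α_j ‖∇f(x_j)‖²`. -/
theorem stmt_9 {E : Type*} [NormedAddCommGroup E] [InnerProductSpace ℝ E] [CompleteSpace E]
    (f : E → ℝ) (hf : Differentiable ℝ f) (L fstar : ℝ) (hL : 0 < L)
    (hLip : ∀ u v : E, ‖gradient f u - gradient f v‖ ≤ L * ‖u - v‖)
    (hfstar : ∀ y, fstar ≤ f y)
    (γ η c₃ β αbar ν : ℝ) (hγ : 1 < γ) (hη : 0 < η) (hη1 : η < 1)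
    (hc₃ : 0 < c₃) (hβ : 0 < β) (hαbar : 0 < αbar) (hν : 0 < ν) (hν1 : ν < 1)
    (hνcond : ν * η * c₃ ≥ (1 - ν) * ((L * αbar * β + 1) ^ 2 * γ - γ⁻¹))
    (xk xk1 : E) (αk αk1 : ℝ)
    (hαk : 0 < αk) (hαkbar : αk ≤ αbar) (hαk1 : 0 < αk1) (hαk1bar : αk1 ≤ αbar)
    (hcase : (∃ d : E, xk1 = xk + αk • d ∧ ‖d‖ ≤ β * ‖gradient f xk‖ ∧
        f xk - f xk1 ≥ η * c₃ * αk * ‖gradient f xk‖ ^ 2 ∧ αk1 ≤ γ * αk) ∨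
      (xk1 = xk ∧ αk1 = γ⁻¹ * αk)) :
    (ν * (f xk - fstar) + (1 - ν) * αk * ‖gradient f xk‖ ^ 2) -
      (ν * (f xk1 - fstar) + (1 - ν) * αk1 * ‖gradient f xk1‖ ^ 2) ≥
      (1 - ν) * (1 - γ⁻¹) * αk * ‖gradient f xk‖ ^ 2 :=
  stmt_9_general f L fstar hL hLip γ η c₃ β αbar ν hγ hν hν1 hνcond xk xk1 αk αk1 hαk hαkbar hcase
end

section
/- Let E be a real inner product space, f : E → ℝ differentiable with ∇f Lipschitz continuous with constant L > 0 and f(y) ≥ f* for all y and some f* ∈ ℝ. Let γ > 1, η ∈ (0,1), c₃ > 0, β > 0, ᾱ > 0, α̲ > 0, ε > 0, and ν ∈ (0,1) with ν·η·c₃ ≥ (1 − ν)·((L·ᾱ·β + 1)²·γ − γ⁻¹). Let (x_k)_{k∈ℕ} in E and (α_k)_{k∈ℕ} in (0, ᾱ] be sequences such that α_k ≥ α̲ for all k, and for every k either (successful) x_{k+1} = x_k + α_k·d_k with ‖d_k‖ ≤ β·‖∇f(x_k)‖, f(x_k) − f(x_{k+1}) ≥ η·c₃·α_k·‖∇f(x_k)‖²,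 and α_{k+1} ≤ γ·α_k, or (unsuccessful) x_{k+1} = x_k and α_{k+1} = γ⁻¹·α_k. Define T_ε := min{k ∈ ℕ : ‖∇f(x_k)‖ ≤ ε}. Then T_ε ≤ (ν·(f(x_0) − f*) + (1 − ν)·α_0·‖∇f(x_0)‖²) / ((1 − ν)·(1 − γ⁻¹)·α̲·ε²). -/
/-!
Along the iterates, the merit function `Φ_k = ν (f(x_k) - f*) + (1 - ν) α_k ‖∇f(x_k)‖²` decreases
by at least `(1 - ν)(1 - γ⁻¹) α_k ‖∇f(x_k)‖²` per iteration. On an unsuccessful step this is an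
identity. On a successful step the function value drops by `η c₃ α_k ‖∇f(x_k)‖²`, while the
Lipschitz gradient grows by at most the factor `L ᾱ β + 1` and the stepsize by at most `γ`; the
condition on `ν` is exactly what makes the net decrease at least the unsuccessful one. Before
`T_ε` every decrease is at least `(1 - ν)(1 - γ⁻¹) α̲ ε²`, and `Φ ≥ 0`, so telescoping bounds `T_ε`.
-/

open Finset

theorem nat_mul_le_of_forall_add_le {Φ : ℕ → ℝ} {c : ℝ} {T : ℕ}
    (hstep : ∀ k < T, Φ (k + 1) + c ≤ Φ k) (hT : 0 ≤ Φ T) : (T : ℝ) * c ≤ Φ 0 :=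
  calc (T : ℝ) * c = ∑ _k ∈ range T, c := by simp
    _ ≤ ∑ k ∈ range T, (Φ k - Φ (k + 1)) :=
      sum_le_sum fun k hk => by linarith [hstep k (mem_range.1 hk)]
    _ = Φ 0 - Φ T := sum_range_sub' Φ T
    _ ≤ Φ 0 := by linarith

theorem norm_apply_add_smul_le {E F : Type*} [NormedAddCommGroup E] [NormedSpace ℝ E]
    [SeminormedAddCommGroup F] {g : E → F} {L : ℝ} (hL : 0 ≤ L)
    (hLip : ∀ u v, ‖g u - g v‖ ≤ L * ‖u - v‖) {x d : E} {a αbar β : ℝ}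
    (ha : 0 ≤ a) (ha_le : a ≤ αbar) (hd : ‖d‖ ≤ β * ‖g x‖) :
    ‖g (x + a • d)‖ ≤ (L * αbar * β + 1) * ‖g x‖ := by
  have hstep : a * ‖d‖ ≤ αbar * (β * ‖g x‖) :=
    mul_le_mul ha_le hd (norm_nonneg d) (ha.trans ha_le)
  calc ‖g (x + a • d)‖ ≤ ‖g x‖ + ‖g (x + a • d) - g x‖ := norm_le_insert' _ _
    _ ≤ ‖g x‖ + L * (a * ‖d‖) := by
      grw [hLip]
      rw [add_sub_cancel_left, norm_smul, Real.norm_of_nonneg ha]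
    _ ≤ ‖g x‖ + L * (αbar * (β * ‖g x‖)) := by gcongr
    _ = (L * αbar * β + 1) * ‖g x‖ := by ring

open scoped Gradient

section Merit

variable {E : Type*} [NormedAddCommGroup E] [InnerProductSpace ℝ E] [CompleteSpace E]

/-- The progress measure `Φ` of the paper, evaluated at an iterate `x` with stepsize `a`. -/
noncomputable def lineSearchMerit (f : E → ℝ) (fstar ν : ℝ) (x : E) (a : ℝ) : ℝ :=
  ν * (f x - fstar) + (1 - ν) * a * ‖∇ f x‖ ^ 2

variable {f : E → ℝ} {fstar ν : ℝ}

theorem lineSearchMerit_nonneg (hν : 0 ≤ ν) (hν1 : ν ≤ 1) {x : E} (hx : fstar ≤ f x) {a : ℝ}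
    (ha : 0 ≤ a) : 0 ≤ lineSearchMerit f fstar ν x a := by
  have : 0 ≤ f x - fstar := sub_nonneg.2 hx
  have : 0 ≤ 1 - ν := sub_nonneg.2 hν1
  unfold lineSearchMerit
  positivity

theorem lineSearchMerit_shrink_add (x : E) (a γ : ℝ) :
    lineSearchMerit f fstar ν x (γ⁻¹ * a) + (1 - ν) * (1 - γ⁻¹) * a * ‖∇ f x‖ ^ 2 =
      lineSearchMerit f fstar ν x a := by
  unfold lineSearchMerit
  ring

theorem lineSearchMerit_add_le_of_successful {L γ η c₃ αbar β : ℝ} (hν : 0 ≤ ν) (hν1 : ν ≤ 1)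
    (hγ : 0 ≤ γ) (hL : 0 ≤ L) (hLip : ∀ u v, ‖∇ f u - ∇ f v‖ ≤ L * ‖u - v‖)
    (hνcond : ν * η * c₃ ≥ (1 - ν) * ((L * αbar * β + 1) ^ 2 * γ - γ⁻¹))
    {x d : E} {a a' : ℝ} (ha : 0 ≤ a) (ha_le : a ≤ αbar) (hd : ‖d‖ ≤ β * ‖∇ f x‖)
    (hdec : f x - f (x + a • d) ≥ η * c₃ * a * ‖∇ f x‖ ^ 2) (ha' : a' ≤ γ * a) :
    lineSearchMerit f fstar ν (x + a • d) a' + (1 - ν) * (1 - γ⁻¹) * a * ‖∇ f x‖ ^ 2 ≤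
      lineSearchMerit f fstar ν x a := by
  set K := L * αbar * β + 1
  set g := ‖∇ f x‖
  have hgrad : ‖∇ f (x + a • d)‖ ^ 2 ≤ K ^ 2 * g ^ 2 := by
    rw [← mul_pow]
    gcongr
    exact norm_apply_add_smul_le hL hLip ha ha_le hd
  have hgrowth : a' * ‖∇ f (x + a • d)‖ ^ 2 ≤ γ * a * (K ^ 2 * g ^ 2) :=
    mul_le_mul ha' hgrad (by positivity) (by positivity)
  have hcoef : (1 - ν) * (1 - γ⁻¹) * (a * g ^ 2) ≤
      (ν * η * c₃ + (1 - ν) - (1 - ν) * (K ^ 2 * γ)) * (a * g ^ 2) := by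
    gcongr
    linarith
  have h1ν : 0 ≤ 1 - ν := sub_nonneg.2 hν1
  unfold lineSearchMerit
  nlinarith [mul_le_mul_of_nonneg_left hdec hν, mul_le_mul_of_nonneg_left hgrowth h1ν]

end Merit

theorem stmt_10_general {E : Type*} [NormedAddCommGroup E] [InnerProductSpace ℝ E] [CompleteSpace E]
    (f : E → ℝ) (L fstar : ℝ) (hL : 0 < L)
    (hLip : ∀ u v : E, ‖gradient f u - gradient f v‖ ≤ L * ‖u - v‖)
    (hfstar : ∀ y, fstar ≤ f y)
    (γ η c₃ β αbar αlow ε ν : ℝ) (hγ : 1 < γ)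
    (hαlow : 0 < αlow) (hε : 0 < ε)
    (hν : 0 < ν) (hν1 : ν < 1)
    (hνcond : ν * η * c₃ ≥ (1 - ν) * ((L * αbar * β + 1) ^ 2 * γ - γ⁻¹))
    (x : ℕ → E) (α : ℕ → ℝ)
    (hαpos : ∀ k, 0 < α k) (hαle : ∀ k, α k ≤ αbar) (hαge : ∀ k, αlow ≤ α k)
    (hcase : ∀ k : ℕ,
      (∃ d : E, x (k + 1) = x k + α k • d ∧ ‖d‖ ≤ β * ‖gradient f (x k)‖ ∧
        f (x k) - f (x (k + 1)) ≥ η * c₃ * α k * ‖gradient f (x k)‖ ^ 2 ∧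
        α (k + 1) ≤ γ * α k) ∨
      (x (k + 1) = x k ∧ α (k + 1) = γ⁻¹ * α k)) :
    ∀ T : ℕ, (∀ k < T, ε < ‖gradient f (x k)‖) →
      (T : ℝ) ≤ (ν * (f (x 0) - fstar) + (1 - ν) * α 0 * ‖gradient f (x 0)‖ ^ 2) /
        ((1 - ν) * (1 - γ⁻¹) * αlow * ε ^ 2) := by
  intro T hT
  set Φ : ℕ → ℝ := fun k => lineSearchMerit f fstar ν (x k) (α k)
  have hshrink : 0 < 1 - γ⁻¹ := sub_pos.2 (inv_lt_one_of_one_lt₀ hγ)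
  have hstep : ∀ k, Φ (k + 1) + (1 - ν) * (1 - γ⁻¹) * α k * ‖∇ f (x k)‖ ^ 2 ≤ Φ k := by
    intro k
    rcases hcase k with ⟨d, hx, hd, hdec, hα⟩ | ⟨hx, hα⟩
    · simp only [Φ, hx] at hdec ⊢
      exact lineSearchMerit_add_le_of_successful hν.le hν1.le (by linarith) hL.le hLip hνcond
        (hαpos k).le (hαle k) hd hdec hα
    · simp only [Φ, hx, hα]
      exact (lineSearchMerit_shrink_add _ _ _).le
  have hdecrease : ∀ k < T, Φ (k + 1) + (1 - ν) * (1 - γ⁻¹) * αlow * ε ^ 2 ≤ Φ k := by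
    intro k hk
    have hgrad : αlow * ε ^ 2 ≤ α k * ‖∇ f (x k)‖ ^ 2 := by
      gcongr
      exacts [(hαpos k).le, hαge k, (hT k hk).le]
    have : 0 ≤ (1 - ν) * (1 - γ⁻¹) := mul_nonneg (sub_nonneg.2 hν1.le) hshrink.le
    linarith [hstep k, mul_le_mul_of_nonneg_left hgrad this]
  rw [le_div_iff₀ (by positivity)]
  exact nat_mul_le_of_forall_add_le hdecrease
    (lineSearchMerit_nonneg hν.le hν1.le (hfstar _) (hαpos T).le)

/-- `O(ε⁻²)` iteration complexity for the classical line search instance of the adaptive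
deterministic framework.  The stopping time `T_ε = min {k : ‖∇f(x_k)‖ ≤ ε}` is captured by
quantifying over all `T` such that `ε < ‖∇f(x_k)‖` for every `k < T`. -/
theorem stmt_10 {E : Type*} [NormedAddCommGroup E] [InnerProductSpace ℝ E] [CompleteSpace E]
    (f : E → ℝ) (hf : Differentiable ℝ f) (L fstar : ℝ) (hL : 0 < L)
    (hLip : ∀ u v : E, ‖gradient f u - gradient f v‖ ≤ L * ‖u - v‖)
    (hfstar : ∀ y, fstar ≤ f y)
    (γ η c₃ β αbar αlow ε ν : ℝ) (hγ : 1 < γ) (hη : 0 < η) (hη1 : η < 1)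
    (hc₃ : 0 < c₃) (hβ : 0 < β) (hαbar : 0 < αbar) (hαlow : 0 < αlow) (hε : 0 < ε)
    (hν : 0 < ν) (hν1 : ν < 1)
    (hνcond : ν * η * c₃ ≥ (1 - ν) * ((L * αbar * β + 1) ^ 2 * γ - γ⁻¹))
    (x : ℕ → E) (α : ℕ → ℝ)
    (hαpos : ∀ k, 0 < α k) (hαle : ∀ k, α k ≤ αbar) (hαge : ∀ k, αlow ≤ α k)
    (hcase : ∀ k : ℕ,
      (∃ d : E, x (k + 1) = x k + α k • d ∧ ‖d‖ ≤ β * ‖gradient f (x k)‖ ∧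
        f (x k) - f (x (k + 1)) ≥ η * c₃ * α k * ‖gradient f (x k)‖ ^ 2 ∧
        α (k + 1) ≤ γ * α k) ∨
      (x (k + 1) = x k ∧ α (k + 1) = γ⁻¹ * α k)) :
    ∀ T : ℕ, (∀ k < T, ε < ‖gradient f (x k)‖) →
      (T : ℝ) ≤ (ν * (f (x 0) - fstar) + (1 - ν) * α 0 * ‖gradient f (x 0)‖ ^ 2) /
        ((1 - ν) * (1 - γ⁻¹) * αlow * ε ^ 2) :=
  stmt_10_general f L fstar hL hLip hfstar γ η c₃ β αbar αlow ε ν hγ hαlow hε hν hν1 hνcond x α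
    hαpos hαle hαge hcase
end

section
/- Let γ > 1, η ∈ (0,1), c₄ > 0, f* ∈ ℝ, and ν ∈ (0,1) satisfy ν·η·c₄ ≥ (1 − ν)·(γ + 1 − γ⁻¹). Let E be a real inner product space, f : E → ℝ differentiable with f(y) ≥ f* for all y, and let x_k, x_{k+1} ∈ E and α_k, α_{k+1} > 0 be such that EITHER (successful case) f(x_k) − f(x_{k+1}) ≥ η·c₄·α_k·‖∇f(x_{k+1})‖^{3/2} and α_{k+1} ≤ γ·α_k, OR (unsuccessful case) x_{k+1} = x_k and α_{k+1} = γ⁻¹·α_k. Define Φ_j = ν·(f(x_j) − f*) + (1 − ν)·α_j·‖∇f(x_j)‖^{3/2} for j ∈ {k, k+1}. Then Φ_k − Φ_{k+1} ≥ (1 − ν)·(1 − γ⁻¹)·α_k·‖∇f(x_{k+1})‖^{3/2}. -/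
/-!
On an unsuccessful iteration the iterate is unchanged, so the function terms of `Φ` cancel and
the drop is exactly `(1 - ν)(1 - γ⁻¹) α_k G`, with `G = ‖∇f(x_{k+1})‖^{3/2}`. On a successful
iteration the function term drops by at least `ν η c₄ α_k G`, the gradient term at `x_k` can be
discarded and the one at `x_{k+1}` grows to at most `(1 - ν) γ α_k G`; the condition on `ν` is
exactly what makes `ν η c₄ - (1 - ν) γ ≥ (1 - ν)(1 - γ⁻¹)`.
-/

/-- `Φ` at an iterate with function value `F` and `G = ‖∇f‖^{3/2}` there. -/
def progressMeasure (ν fstar F α G : ℝ) : ℝ :=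
  ν * (F - fstar) + (1 - ν) * α * G

theorem progressMeasure_sub_of_unsuccessful (ν fstar F γ α G : ℝ) :
    progressMeasure ν fstar F α G - progressMeasure ν fstar F (γ⁻¹ * α) G =
      (1 - ν) * (1 - γ⁻¹) * α * G := by
  unfold progressMeasure
  ring

theorem progressMeasure_sub_ge_of_successful {ν fstar γ σ Fk Fk1 αk αk1 Gk G : ℝ}
    (hν : 0 ≤ ν) (hν1 : ν ≤ 1) (hνσ : ν * σ ≥ (1 - ν) * (γ + 1 - γ⁻¹))
    (hαk : 0 ≤ αk) (hGk : 0 ≤ Gk) (hG : 0 ≤ G)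
    (hdec : Fk - Fk1 ≥ σ * αk * G) (hα : αk1 ≤ γ * αk) :
    progressMeasure ν fstar Fk αk Gk - progressMeasure ν fstar Fk1 αk1 G ≥
      (1 - ν) * (1 - γ⁻¹) * αk * G := by
  have h1ν : 0 ≤ 1 - ν := sub_nonneg.mpr hν1
  have hαkG : 0 ≤ αk * G := mul_nonneg hαk hG
  calc progressMeasure ν fstar Fk αk Gk - progressMeasure ν fstar Fk1 αk1 G
      = ν * (Fk - Fk1) + (1 - ν) * αk * Gk - (1 - ν) * αk1 * G := by
        unfold progressMeasure; ring
    _ ≥ ν * (σ * αk * G) + 0 - (1 - ν) * (γ * αk) * G := by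
        gcongr
        positivity
    _ = ν * σ * (αk * G) - (1 - ν) * γ * (αk * G) := by ring
    _ ≥ (1 - ν) * (γ + 1 - γ⁻¹) * (αk * G) - (1 - ν) * γ * (αk * G) := by gcongr
    _ = (1 - ν) * (1 - γ⁻¹) * αk * G := by ring

theorem stmt_11_general {E : Type*} [NormedAddCommGroup E] [InnerProductSpace ℝ E] [CompleteSpace E]
    (γ η c₄ fstar ν : ℝ)
    (hν : 0 < ν) (hν1 : ν < 1)
    (hνcond : ν * η * c₄ ≥ (1 - ν) * (γ + 1 - γ⁻¹))
    (f : E → ℝ)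
    (xk xk1 : E) (αk αk1 : ℝ) (hαk : 0 < αk)
    (hcase : (f xk - f xk1 ≥ η * c₄ * αk * ‖gradient f xk1‖ ^ ((3 : ℝ) / 2) ∧
        αk1 ≤ γ * αk) ∨
      (xk1 = xk ∧ αk1 = γ⁻¹ * αk)) :
    (ν * (f xk - fstar) + (1 - ν) * αk * ‖gradient f xk‖ ^ ((3 : ℝ) / 2)) -
      (ν * (f xk1 - fstar) + (1 - ν) * αk1 * ‖gradient f xk1‖ ^ ((3 : ℝ) / 2)) ≥
      (1 - ν) * (1 - γ⁻¹) * αk * ‖gradient f xk1‖ ^ ((3 : ℝ) / 2) := by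
  rcases hcase with ⟨hdec, hα⟩ | ⟨rfl, rfl⟩
  · exact progressMeasure_sub_ge_of_successful hν.le hν1.le (by rwa [← mul_assoc]) hαk.le
      (by positivity) (by positivity) hdec hα
  · exact (progressMeasure_sub_of_unsuccessful ν fstar _ γ αk _).ge

/-- Per-iteration progress bound for the cubicly regularized Newton instance of the
adaptive deterministic framework, with progress measure
`Φ_j = ν (f x_j - f*) + (1-ν) α_j ‖∇f(x_j)‖^(3/2)`. -/
theorem stmt_11 {E : Type*} [NormedAddCommGroup E] [InnerProductSpace ℝ E] [CompleteSpace E]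
    (γ η c₄ fstar ν : ℝ) (hγ : 1 < γ) (hη : 0 < η) (hη1 : η < 1) (hc₄ : 0 < c₄)
    (hν : 0 < ν) (hν1 : ν < 1)
    (hνcond : ν * η * c₄ ≥ (1 - ν) * (γ + 1 - γ⁻¹))
    (f : E → ℝ) (hf : Differentiable ℝ f) (hfstar : ∀ y, fstar ≤ f y)
    (xk xk1 : E) (αk αk1 : ℝ) (hαk : 0 < αk) (hαk1 : 0 < αk1)
    (hcase : (f xk - f xk1 ≥ η * c₄ * αk * ‖gradient f xk1‖ ^ ((3 : ℝ) / 2) ∧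
        αk1 ≤ γ * αk) ∨
      (xk1 = xk ∧ αk1 = γ⁻¹ * αk)) :
    (ν * (f xk - fstar) + (1 - ν) * αk * ‖gradient f xk‖ ^ ((3 : ℝ) / 2)) -
      (ν * (f xk1 - fstar) + (1 - ν) * αk1 * ‖gradient f xk1‖ ^ ((3 : ℝ) / 2)) ≥
      (1 - ν) * (1 - γ⁻¹) * αk * ‖gradient f xk1‖ ^ ((3 : ℝ) / 2) :=
  stmt_11_general γ η c₄ fstar ν hν hν1 hνcond f xk xk1 αk αk1 hαk hcase
end

section
/- Let E be a real inner product space, f : E → ℝ a convex differentiable function with a global minimizer x* ∈ E, and set f* = f(x*). Let x, x' ∈ E, D > 0, c > 0, and α > 0 be such that ‖x − x*‖ ≤ D, f(x') > f*, f(x') < f(x), and f(x) − f(x') ≥ c·α·‖∇f(x)‖². Then 1/(f(x') − f*) − 1/(f(x) − f*) ≥ c·α/D². -/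
/-!
Convexity makes the tangent plane at `x` a global minorant of `f`, so by Cauchy–Schwarz the
optimality gap `a = f x - f*` is at most `D ‖∇f x‖`. With `b = f x' - f*`, the decrease
`a - b ≥ c α ‖∇f x‖²` then gives `1/b - 1/a = (a - b)/(a b) ≥ c α ‖∇f x‖² / a² ≥ c α / D²`.
-/

open scoped RealInnerProductSpace

theorem ConvexOn.add_fderiv_le {E : Type*} [NormedAddCommGroup E] [NormedSpace ℝ E]
    {s : Set E} {f : E → ℝ} {f' : E →L[ℝ] ℝ} {x y : E} (hconv : ConvexOn ℝ s f)
    (hx : x ∈ s) (hy : y ∈ s) (hf : HasFDerivAt f f' x) :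
    f x + f' (y - x) ≤ f y := by
  let ℓ : ℝ →ᵃ[ℝ] E := AffineMap.lineMap x y
  have hℓ0 : ℓ 0 = x := AffineMap.lineMap_apply_zero x y
  have hℓ1 : ℓ 1 = y := AffineMap.lineMap_apply_one x y
  have hline : HasDerivAt (f ∘ ℓ) (f' (y - x)) 0 :=
    (hℓ0 ▸ hf).comp_hasDerivAt 0 AffineMap.hasDerivAt_lineMap
  have hslope := (hconv.comp_affineMap ℓ).le_slope_of_hasDerivAt
    (by simpa [hℓ0] using hx) (by simpa [hℓ1] using hy) zero_lt_one hline
  simp only [slope_def_field, Function.comp_apply, hℓ0, hℓ1, sub_zero, div_one] at hslope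
  linarith

section InnerProductSpace

variable {E : Type*} [NormedAddCommGroup E] [InnerProductSpace ℝ E] [CompleteSpace E]
  {f : E → ℝ} {x y : E}

theorem ConvexOn.sub_le_inner_gradient (hconv : ConvexOn ℝ Set.univ f)
    (hf : DifferentiableAt ℝ f x) : f x - f y ≤ ⟪gradient f x, x - y⟫ := by
  have h := hconv.add_fderiv_le (Set.mem_univ x) (Set.mem_univ y) hf.hasGradientAt.hasFDerivAt
  rw [InnerProductSpace.toDual_apply_apply, ← neg_sub x y, inner_neg_right] at h
  linarith

theorem ConvexOn.sub_le_norm_gradient_mul {D : ℝ} (hconv : ConvexOn ℝ Set.univ f)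
    (hf : DifferentiableAt ℝ f x) (hxy : ‖x - y‖ ≤ D) :
    f x - f y ≤ ‖gradient f x‖ * D :=
  calc f x - f y ≤ ⟪gradient f x, x - y⟫ := hconv.sub_le_inner_gradient hf
    _ ≤ ‖gradient f x‖ * ‖x - y‖ := real_inner_le_norm _ _
    _ ≤ ‖gradient f x‖ * D := mul_le_mul_of_nonneg_left hxy (norm_nonneg _)

end InnerProductSpace

theorem div_sq_le_one_div_sub_one_div {a b G D κ : ℝ} (hb : 0 < b) (hκ : 0 ≤ κ)
    (ha : a ≤ G * D) (hab : κ * G ^ 2 ≤ a - b) : κ / D ^ 2 ≤ 1 / b - 1 / a := by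
  have hba : b ≤ a := by linarith [mul_nonneg hκ (sq_nonneg G)]
  have ha0 : 0 < a := hb.trans_le hba
  have hGD : 0 < G * D := ha0.trans_le ha
  calc κ / D ^ 2 = κ * G ^ 2 / (G * D) ^ 2 := by
        have : G ≠ 0 := by rintro rfl; simp at hGD
        field_simp
    _ ≤ κ * G ^ 2 / a ^ 2 := by gcongr
    _ ≤ (a - b) / a ^ 2 := by gcongr
    _ ≤ (a - b) / (a * b) := by gcongr; nlinarith
    _ = 1 / b - 1 / a := by field_simp

theorem stmt_13_general {E : Type*} [NormedAddCommGroup E] [InnerProductSpace ℝ E] [CompleteSpace E]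
    (f : E → ℝ) (hconv : ConvexOn ℝ Set.univ f) (hf : Differentiable ℝ f)
    (xstar : E)
    (x x' : E) (D c α : ℝ) (hc : 0 < c) (hα : 0 < α)
    (hdist : ‖x - xstar‖ ≤ D)
    (hgap : f xstar < f x')
    (hsuff : f x - f x' ≥ c * α * ‖gradient f x‖ ^ 2) :
    1 / (f x' - f xstar) - 1 / (f x - f xstar) ≥ c * α / D ^ 2 :=
  div_sq_le_one_div_sub_one_div (sub_pos.2 hgap) (mul_pos hc hα).le
    (hconv.sub_le_norm_gradient_mul (hf x) hdist) (by linarith)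

/-- Convex line search progress: if `f` is convex with global minimizer `x*`,
`‖x - x*‖ ≤ D`, and a successful iteration achieves `f(x) - f(x') ≥ c α ‖∇f(x)‖²`
with `f* < f(x') < f(x)`, then the reciprocal optimality gap increases by at least
`c α / D²`. -/
theorem stmt_13 {E : Type*} [NormedAddCommGroup E] [InnerProductSpace ℝ E] [CompleteSpace E]
    (f : E → ℝ) (hconv : ConvexOn ℝ Set.univ f) (hf : Differentiable ℝ f)
    (xstar : E) (hmin : ∀ y, f xstar ≤ f y)
    (x x' : E) (D c α : ℝ) (hD : 0 < D) (hc : 0 < c) (hα : 0 < α)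
    (hdist : ‖x - xstar‖ ≤ D)
    (hgap : f xstar < f x') (hdec : f x' < f x)
    (hsuff : f x - f x' ≥ c * α * ‖gradient f x‖ ^ 2) :
    1 / (f x' - f xstar) - 1 / (f x - f xstar) ≥ c * α / D ^ 2 :=
  stmt_13_general f hconv hf xstar x x' D c α hc hα hdist hgap hsuff
end

section
/- Let E be a real inner product space, f : E → ℝ with f(y) > f* for all y and some f* ∈ ℝ. Let γ > 1, ᾱ > 0, α̲ ∈ (0, ᾱ], α_0 ∈ (0, ᾱ], c₅ > 0, ε > 0, and ν ∈ (0,1) satisfy ν·c₅ ≥ (1 − ν)·((γ − 1)·ᾱ + (1 − γ⁻¹)·α̲). Let (x_k)_{k∈ℕ} in E and (α_k)_{k∈ℕ} in [α̲, ᾱ] be sequences such that for every k either (successful) 1/(f(x_{k+1}) − f*) − 1/(f(x_k) − f*) ≥ c₅ with f(x_{k+1}) ≤ f(x_k), and α_{k+1} ≤ γ·α_k, or (unsuccessful) x_{k+1} = x_k and α_{k+1} = γ⁻¹·α_k. Define T_ε := min{k ∈ ℕ : f(x_k) − f* ≤ ε}. Then T_ε ≤ (ν/ε + (1 − ν)·α_0)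 / ((1 − ν)·(1 − γ⁻¹)·α̲) + 1. -/
/-!
The potential `Φ_k = ν (1/ε - 1/(f(x_k) - f*)) + (1 - ν) α_k` drops by at least
`δ = (1 - ν)(1 - γ⁻¹) α̲` at every iteration: on an unsuccessful one the stepsize shrinks by
`(1 - γ⁻¹) α_k ≥ (1 - γ⁻¹) α̲`, and on a successful one the gain `ν c₅` in the reciprocal gap
outweighs the stepsize growth `(γ - 1) ᾱ` by at least `δ`, which is exactly the condition on `ν`.
While the gap exceeds `ε` the potential is nonnegative, so it can drop at most `Φ_0 / δ` times.
-/

lemma le_sub_mul_of_forall_succ_le_sub {Φ : ℕ → ℝ} {δ : ℝ} (hstep : ∀ k, Φ (k + 1) ≤ Φ k - δ)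
    (n : ℕ) : Φ n ≤ Φ 0 - n * δ := by
  induction n with
  | zero => simp
  | succ n ih =>
    push_cast
    linarith [hstep n]

lemma natCast_le_div_of_forall_succ_le_sub {Φ : ℕ → ℝ} {δ : ℝ} (hδ : 0 < δ)
    (hstep : ∀ k, Φ (k + 1) ≤ Φ k - δ) {n : ℕ} (hn : 0 ≤ Φ n) : (n : ℝ) ≤ Φ 0 / δ := by
  rw [le_div_iff₀ hδ]
  linarith [le_sub_mul_of_forall_succ_le_sub hstep n]

/-- The progress measure, written for the optimality gaps `g k = f (x k) - f*`. -/
noncomputable def progress (ν ε : ℝ) (g α : ℕ → ℝ) (k : ℕ) : ℝ :=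
  ν * (1 / ε - 1 / g k) + (1 - ν) * α k

section progress

variable {ν ε γ αbar αlow c₅ : ℝ} {g α : ℕ → ℝ} {k : ℕ}

lemma progress_succ_le_of_successful (hν : 0 ≤ ν) (hν1 : ν ≤ 1) (hγ : 1 ≤ γ)
    (hνcond : ν * c₅ ≥ (1 - ν) * ((γ - 1) * αbar + (1 - γ⁻¹) * αlow))
    (hgap : 1 / g (k + 1) - 1 / g k ≥ c₅) (hα : α (k + 1) ≤ γ * α k) (hαk : α k ≤ αbar) :
    progress ν ε g α (k + 1) ≤ progress ν ε g α k - (1 - ν) * (1 - γ⁻¹) * αlow := by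
  have hgrowth : (1 - ν) * (α (k + 1) - α k) ≤ (1 - ν) * ((γ - 1) * αbar) := by
    gcongr
    nlinarith
  unfold progress
  nlinarith [mul_le_mul_of_nonneg_left hgap hν]

lemma progress_succ_le_of_unsuccessful (hν1 : ν ≤ 1) (hγ : 1 ≤ γ) (hg : g (k + 1) = g k)
    (hα : α (k + 1) = γ⁻¹ * α k) (hαk : αlow ≤ α k) :
    progress ν ε g α (k + 1) ≤ progress ν ε g α k - (1 - ν) * (1 - γ⁻¹) * αlow := by
  have hshrink : (1 - ν) * ((1 - γ⁻¹) * αlow) ≤ (1 - ν) * ((1 - γ⁻¹) * α k) := by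
    have : γ⁻¹ ≤ 1 := inv_le_one_of_one_le₀ hγ
    gcongr
  unfold progress
  rw [hg, hα]
  linarith

lemma progress_nonneg (hν : 0 ≤ ν) (hν1 : ν ≤ 1) (hε : 0 < ε) (hgap : ε ≤ g k)
    (hα : 0 ≤ α k) : 0 ≤ progress ν ε g α k := by
  have : 1 / g k ≤ 1 / ε := one_div_le_one_div_of_le hε hgap
  unfold progress
  nlinarith

lemma progress_le (hν : 0 ≤ ν) (hg : 0 ≤ g k) :
    progress ν ε g α k ≤ ν / ε + (1 - ν) * α k := by
  have : 0 ≤ ν * (1 / g k) := by positivity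
  unfold progress
  linarith [mul_one_div ν ε]

end progress

theorem stmt_15_general {E : Type*}
    (f : E → ℝ) (fstar : ℝ)
    (γ αbar αlow c₅ ε ν : ℝ) (hγ : 1 < γ)
    (hαlowpos : 0 < αlow) (hε : 0 < ε)
    (hν : 0 < ν) (hν1 : ν < 1)
    (hνcond : ν * c₅ ≥ (1 - ν) * ((γ - 1) * αbar + (1 - γ⁻¹) * αlow))
    (x : ℕ → E) (α : ℕ → ℝ)
    (hαrange : ∀ k, αlow ≤ α k ∧ α k ≤ αbar)
    (hcase : ∀ k : ℕ,
      (1 / (f (x (k + 1)) - fstar) - 1 / (f (x k) - fstar) ≥ c₅ ∧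
        f (x (k + 1)) ≤ f (x k) ∧ α (k + 1) ≤ γ * α k) ∨
      (x (k + 1) = x k ∧ α (k + 1) = γ⁻¹ * α k)) :
    ∀ T : ℕ, (∀ k < T, ε < f (x k) - fstar) →
      (T : ℝ) ≤ (ν / ε + (1 - ν) * α 0) / ((1 - ν) * (1 - γ⁻¹) * αlow) + 1 := by
  intro T hT
  set g : ℕ → ℝ := fun k => f (x k) - fstar
  have hδ : 0 < (1 - ν) * (1 - γ⁻¹) * αlow := by
    have : γ⁻¹ < 1 := inv_lt_one_of_one_lt₀ hγ
    exact mul_pos (mul_pos (by linarith) (by linarith)) hαlowpos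
  have hstep (k : ℕ) :
      progress ν ε g α (k + 1) ≤ progress ν ε g α k - (1 - ν) * (1 - γ⁻¹) * αlow := by
    rcases hcase k with ⟨hgap, -, hα⟩ | ⟨hx, hα⟩
    · exact progress_succ_le_of_successful hν.le hν1.le hγ.le hνcond hgap hα (hαrange k).2
    · exact progress_succ_le_of_unsuccessful hν1.le hγ.le (by simp only [g, hx]) hα
        (hαrange k).1
  have hbound : 0 ≤ ν / ε + (1 - ν) * α 0 := by
    have := (hαrange 0).1
    have := div_pos hν hε
    nlinarith
  rcases T with _ | S
  · push_cast
    linarith [div_nonneg hbound hδ.le]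
  · have hS := natCast_le_div_of_forall_succ_le_sub hδ hstep
      (progress_nonneg hν.le hν1.le hε (hT S (by omega)).le (hαlowpos.le.trans (hαrange S).1))
    have h0 := progress_le (g := g) (α := α) (ε := ε) hν.le (hε.trans (hT 0 (by omega))).le
    push_cast
    calc (S : ℝ) + 1 ≤ progress ν ε g α 0 / ((1 - ν) * (1 - γ⁻¹) * αlow) + 1 := by gcongr
      _ ≤ (ν / ε + (1 - ν) * α 0) / ((1 - ν) * (1 - γ⁻¹) * αlow) + 1 := by gcongr

/-- `O(ε⁻¹)` complexity for the line search instance of the adaptive deterministic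
framework on convex `f`, with progress measure
`Φ_k = ν (1/ε - 1/(f(x_k) - f*)) + (1-ν) α_k` and stopping time
`T_ε = min {k : f(x_k) - f* ≤ ε}` captured by quantifying over all `T` such that
`ε < f(x_k) - f*` for every `k < T`. -/
theorem stmt_15 {E : Type*} [NormedAddCommGroup E] [InnerProductSpace ℝ E]
    (f : E → ℝ) (fstar : ℝ) (hfstar : ∀ y, fstar < f y)
    (γ αbar αlow c₅ ε ν : ℝ) (hγ : 1 < γ) (hαbar : 0 < αbar)
    (hαlowpos : 0 < αlow) (hαlowle : αlow ≤ αbar) (hc₅ : 0 < c₅) (hε : 0 < ε)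
    (hν : 0 < ν) (hν1 : ν < 1)
    (hνcond : ν * c₅ ≥ (1 - ν) * ((γ - 1) * αbar + (1 - γ⁻¹) * αlow))
    (x : ℕ → E) (α : ℕ → ℝ)
    (hα0pos : 0 < α 0) (hα0le : α 0 ≤ αbar)
    (hαrange : ∀ k, αlow ≤ α k ∧ α k ≤ αbar)
    (hcase : ∀ k : ℕ,
      (1 / (f (x (k + 1)) - fstar) - 1 / (f (x k) - fstar) ≥ c₅ ∧
        f (x (k + 1)) ≤ f (x k) ∧ α (k + 1) ≤ γ * α k) ∨
      (x (k + 1) = x k ∧ α (k + 1) = γ⁻¹ * α k)) :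
    ∀ T : ℕ, (∀ k < T, ε < f (x k) - fstar) →
      (T : ℝ) ≤ (ν / ε + (1 - ν) * α 0) / ((1 - ν) * (1 - γ⁻¹) * αlow) + 1 :=
  stmt_15_general f fstar γ αbar αlow c₅ ε ν hγ hαlowpos hε hν hν1 hνcond x α hαrange hcase
end
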